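/- Kolmogorov's translation is faithful: with A^k as defined by the Kolmogorov double-negation translation, A^k is provable intuitionistically if and only if A is provable classically. -/

import Mathlib

inductive Form (α : Type) : Type
  | atom : α → Form α
  | bot : Form α
  | imp : Form α → Form α → Form α
  | and : Form α → Form α → Form α
  | or : Form α → Form α → Form α

def Form.neg {α : Type} (A : Form α) : Form α := Form.imp A Form.bot

/-- Natural deduction provability; `cl = true` additionally allows
double negation elimination (classical logic). -/
inductive Prov {α : Type} (cl : Bool) : List (Form α) → Form α → Prop
  | ax {Γ A} : A ∈ Γ → Prov cl Γ A
  | impI {Γ A B} : Prov cl (A :: Γ) B → Prov cl Γ (Form.imp A B)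
  | impE {Γ A B} : Prov cl Γ (Form.imp A B) → Prov cl Γ A → Prov cl Γ B
  | andI {Γ A B} : Prov cl Γ A → Prov cl Γ B → Prov cl Γ (Form.and A B)
  | andE1 {Γ A B} : Prov cl Γ (Form.and A B) → Prov cl Γ A
  | andE2 {Γ A B} : Prov cl Γ (Form.and A B) → Prov cl Γ B
  | orI1 {Γ A B} : Prov cl Γ A → Prov cl Γ (Form.or A B)
  | orI2 {Γ A B} : Prov cl Γ B → Prov cl Γ (Form.or A B)
  | orE {Γ A B C} : Prov cl Γ (Form.or A B) → Prov cl (A :: Γ) C →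
      Prov cl (B :: Γ) C → Prov cl Γ C
  | botE {Γ A} : Prov cl Γ Form.bot → Prov cl Γ A
  | dne {Γ A} : cl = true → Prov cl Γ (Form.neg (Form.neg A)) → Prov cl Γ A

def kolm {α : Type} : Form α → Form α
  | Form.atom a => Form.neg (Form.neg (Form.atom a))
  | Form.bot => Form.neg (Form.neg Form.bot)
  | Form.imp A B => Form.neg (Form.neg (Form.imp (kolm A) (kolm B)))
  | Form.and A B => Form.neg (Form.neg (Form.and (kolm A) (kolm B)))
  | Form.or A B => Form.neg (Form.neg (Form.or (kolm A) (kolm B)))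

/-!
Soundness: every translated formula `kolm A` has the shape `¬C`, so it is intuitionistically
stable (`¬¬kolm A ⊢ kolm A`). Hence each introduction rule translates to the same rule followed by
double negation introduction, and each elimination rule (including `⊥`-elimination and double
negation elimination) can be carried out under the double negation of its major premise.
Faithfulness: classically `kolm A` and `A` are equivalent, and intuitionistic derivations are
classical ones.
-/

namespace Prov

variable {α : Type} {cl : Bool} {Γ Δ : List (Form α)} {A B X : Form α}

theorem weaken (h : Prov cl Γ A) (hs : Γ ⊆ Δ) : Prov cl Δ A := by
  induction h generalizing Δ with
  | ax hm => exact ax (hs hm)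
  | impI _ ih => exact impI (ih (List.cons_subset_cons _ hs))
  | impE _ _ ih₁ ih₂ => exact impE (ih₁ hs) (ih₂ hs)
  | andI _ _ ih₁ ih₂ => exact andI (ih₁ hs) (ih₂ hs)
  | andE1 _ ih => exact andE1 (ih hs)
  | andE2 _ ih => exact andE2 (ih hs)
  | orI1 _ ih => exact orI1 (ih hs)
  | orI2 _ ih => exact orI2 (ih hs)
  | orE _ _ _ ih ihl ihr =>
      exact orE (ih hs) (ihl (List.cons_subset_cons _ hs)) (ihr (List.cons_subset_cons _ hs))
  | botE _ ih => exact botE (ih hs)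
  | dne hc _ ih => exact dne hc (ih hs)

theorem weaken_cons (h : Prov cl Γ A) : Prov cl (B :: Γ) A :=
  h.weaken (List.subset_cons_self _ _)

theorem weaken_second (h : Prov cl (X :: Γ) A) : Prov cl (X :: B :: Γ) A :=
  h.weaken (List.cons_subset_cons _ (List.subset_cons_self _ _))

theorem head : Prov cl (A :: Γ) A :=
  ax List.mem_cons_self

theorem second : Prov cl (B :: A :: Γ) A :=
  head.weaken_cons

theorem toClassical (h : Prov false Γ A) : Prov cl Γ A := by
  induction h with
  | ax hm => exact ax hm
  | impI _ ih => exact impI ih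
  | impE _ _ ih₁ ih₂ => exact impE ih₁ ih₂
  | andI _ _ ih₁ ih₂ => exact andI ih₁ ih₂
  | andE1 _ ih => exact andE1 ih
  | andE2 _ ih => exact andE2 ih
  | orI1 _ ih => exact orI1 ih
  | orI2 _ ih => exact orI2 ih
  | orE _ _ _ ih ihl ihr => exact orE ih ihl ihr
  | botE _ ih => exact botE ih
  | dne hc _ _ => exact absurd hc Bool.false_ne_true

theorem dni (h : Prov cl Γ A) : Prov cl Γ A.neg.neg :=
  impI (impE head h.weaken_cons)

theorem neg_neg_iff_of_classical : Prov true Γ A.neg.neg ↔ Prov true Γ A :=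
  ⟨dne rfl, dni⟩

theorem imp_of_neg (h : Prov cl Γ A.neg) : Prov cl Γ (A.imp B) :=
  impI (botE (impE h.weaken_cons head))

theorem neg_of_neg_neg_neg (h : Prov cl Γ A.neg.neg.neg) : Prov cl Γ A.neg :=
  impI (impE h.weaken_cons (dni head))

end Prov

section Kolmogorov

open Prov

variable {α : Type} {cl : Bool} {Γ : List (Form α)} {A X : Form α}

theorem kolm_eq_neg (A : Form α) : ∃ C : Form α, kolm A = C.neg := by
  cases A <;> exact ⟨_, rfl⟩

theorem Prov.kolm_of_neg_neg (h : Prov cl Γ (kolm A).neg.neg) : Prov cl Γ (kolm A) := by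
  obtain ⟨C, hC⟩ := kolm_eq_neg A
  rw [hC] at h ⊢
  exact h.neg_of_neg_neg_neg

theorem Prov.kolm_of_neg_neg_of_cons (h : Prov cl Γ X.neg.neg)
    (hX : Prov cl (X :: Γ) (kolm A)) : Prov cl Γ (kolm A) :=
  kolm_of_neg_neg <| impI <| impE h.weaken_cons <| impI <| impE second hX.weaken_second

theorem prov_kolm_iff_of_classical (A : Form α) (Γ : List (Form α)) :
    Prov true Γ (kolm A) ↔ Prov true Γ A := by
  induction A generalizing Γ with
  | atom a => exact neg_neg_iff_of_classical
  | bot => exact neg_neg_iff_of_classical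
  | imp A B ihA ihB =>
      rw [kolm, neg_neg_iff_of_classical]
      exact ⟨fun h => impI ((ihB _).mp (impE h.weaken_cons ((ihA _).mpr head))),
        fun h => impI ((ihB _).mpr (impE h.weaken_cons ((ihA _).mp head)))⟩
  | and A B ihA ihB =>
      rw [kolm, neg_neg_iff_of_classical]
      exact ⟨fun h => andI ((ihA _).mp h.andE1) ((ihB _).mp h.andE2),
        fun h => andI ((ihA _).mpr h.andE1) ((ihB _).mpr h.andE2)⟩
  | or A B ihA ihB =>
      rw [kolm, neg_neg_iff_of_classical]
      exact ⟨fun h => orE h (orI1 ((ihA _).mp head)) (orI2 ((ihB _).mp head)),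
        fun h => orE h (orI1 ((ihA _).mpr head)) (orI2 ((ihB _).mpr head))⟩

theorem Prov.kolm_of_classical (h : Prov true Γ A) : Prov cl (Γ.map kolm) (kolm A) := by
  induction h with
  | ax hm => exact ax (List.mem_map_of_mem hm)
  | impI _ ih => exact (impI ih).dni
  | impE _ _ ihAB ihA => exact kolm_of_neg_neg_of_cons ihAB (impE head ihA.weaken_cons)
  | andI _ _ ihA ihB => exact (andI ihA ihB).dni
  | andE1 _ ih => exact kolm_of_neg_neg_of_cons ih head.andE1
  | andE2 _ ih => exact kolm_of_neg_neg_of_cons ih head.andE2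
  | orI1 _ ih => exact (orI1 ih).dni
  | orI2 _ ih => exact (orI2 ih).dni
  | orE _ _ _ ihAB ihA ihB =>
      exact kolm_of_neg_neg_of_cons ihAB (orE head ihA.weaken_second ihB.weaken_second)
  | botE _ ih => exact kolm_of_neg_neg_of_cons ih (botE head)
  | @dne Γ A _ _ ih =>
      -- `kolm ¬¬A` is `¬¬(¬¬(kolm A → ¬¬⊥) → ¬¬⊥)`; from `¬kolm A` one gets `kolm A → ¬¬⊥`.
      refine kolm_of_neg_neg_of_cons ih (kolm_of_neg_neg (impI ?_))
      exact impE (impE second (imp_of_neg head).dni) (impI head)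

end Kolmogorov

theorem kolmogorov_faithful {α : Type} (A : Form α) :
    Prov false ([] : List (Form α)) (kolm A) ↔ Prov true ([] : List (Form α)) A :=
  ⟨fun h => (prov_kolm_iff_of_classical A []).mp h.toClassical, Prov.kolm_of_classical⟩
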